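/- Let M be a mean-field MDP satisfying the Lipschitz continuity assumption: there are L_T, L_r ≥ 0 such that for all policies π, π' ∈ Π and all h, s, a: ‖P_{M,h}(·|s,a,μ^π_{M,h}) − P_{M,h}(·|s,a,μ^{π'}_{M,h})‖₁ ≤ L_T·‖μ^π_{M,h} − μ^{π'}_{M,h}‖₁ and |r_h(s,a,μ^π_{M,h}) − r_h(s,a,μ^{π'}_{M,h})| ≤ L_r·‖μ^π_{M,h} − μ^{π'}_{M,h}‖₁. Then for all π, π' ∈ Π and all h, s, a: ‖P_{M,h}(·|s,a,μ^π_{M,h}) − P_{M,h}(·|s,a,μ^{π'}_{M,h})‖₁ ≤ L_T · d_{∞,1}(π,π') · Σ_{h'=1}^{h} (1+L_T)^{h−h'}, and |r_h(s,a,μ^π_{M,h}) − r_h(s,a,μ^{π'}_{M,h})| ≤ L_r · d_{∞,1}(π,π') · Σ_{h'=1}^{h} (1+L_T)^{h−h'}. (Lipschitz continuity of the policy-aware model converted from an MF-MDP.) -/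

import Mathlib

/-!
Write `d_k` for the ℓ1 distance between the state densities induced by `π` and `π'` at step `k`.
One step of the mean-field dynamics moves mass through the policy and then through the kernel
evaluated at the current density; splitting the difference of the two products term by term gives
`d_{k+1} ≤ d_k + d_{∞,1}(π, π') + L_T d_k`. Since `d_0 = 0`, this discrete Grönwall recursion yields
`d_k ≤ d_{∞,1}(π, π') Σ_{j<k} (1 + L_T)^j`, and the Lipschitz assumption at step `k` turns this
bound on densities into the bounds on kernels and rewards.
-/

/-- ℓ1 distance between two functions on a finite type. -/
def l1 {X : Type*} [Fintype X] (p q : X → ℝ) : ℝ := ∑ x, |p x - q x|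

/-- A (nonstationary Markov) policy: at each step `h` (0-indexed) and state `s`,
`π h s` is a probability distribution over actions. -/
def IsPolicy {S A : Type*} [Fintype A] (π : ℕ → S → A → ℝ) : Prop :=
  ∀ h s, (∀ a, 0 ≤ π h s a) ∧ ∑ a, π h s a = 1

/-- The transition kernels of a mean-field MDP with horizon `H`:
at each step `h < H`, `P h s a μ ∈ Δ(S)` whenever `μ ∈ Δ(S)`. -/
def IsKernel {S A : Type*} [Fintype S] (H : ℕ) (P : ℕ → S → A → (S → ℝ) → S → ℝ) : Prop :=
  ∀ h, h < H → ∀ s a (μ : S → ℝ), μ ∈ stdSimplex ℝ S → P h s a μ ∈ stdSimplex ℝ S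

/-- Induced state densities: `dens P μ₁ π h = μ^π_{M,h+1}` (1-indexed step `h+1`). -/
def dens {S A : Type*} [Fintype S] [Fintype A] (P : ℕ → S → A → (S → ℝ) → S → ℝ)
    (μ₁ : S → ℝ) (π : ℕ → S → A → ℝ) : ℕ → S → ℝ
  | 0 => μ₁
  | h + 1 => fun s' => ∑ s, ∑ a, dens P μ₁ π h s * π h s a * P h s a (dens P μ₁ π h) s'

/-- The state law of executing `π̃` while the kernels are frozen at the densities induced
by the reference policy `π` in model `M = (P, μ₁)`. -/
def densF {S A : Type*} [Fintype S] [Fintype A] (P : ℕ → S → A → (S → ℝ) → S → ℝ)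
    (μ₁ : S → ℝ) (π πt : ℕ → S → A → ℝ) : ℕ → S → ℝ
  | 0 => μ₁
  | h + 1 => fun s' => ∑ s, ∑ a, densF P μ₁ π πt h s * πt h s a * P h s a (dens P μ₁ π h) s'

/-- `E_{π̃,M(π)}[Σ_{h=1}^H f_h(s_h,a_h)]`. -/
def expF {S A : Type*} [Fintype S] [Fintype A] (H : ℕ) (P : ℕ → S → A → (S → ℝ) → S → ℝ)
    (μ₁ : S → ℝ) (π πt : ℕ → S → A → ℝ) (f : ℕ → S → A → ℝ) : ℝ :=
  ∑ h ∈ Finset.range H, ∑ s, ∑ a, densF P μ₁ π πt h s * πt h s a * f h s a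

/-- The return `J_M(π̃;π)` of executing `π̃` with transitions and rewards frozen by `π`. -/
def Jret {S A : Type*} [Fintype S] [Fintype A] (H : ℕ) (P : ℕ → S → A → (S → ℝ) → S → ℝ)
    (r : ℕ → S → A → (S → ℝ) → ℝ) (μ₁ : S → ℝ) (πt π : ℕ → S → A → ℝ) : ℝ :=
  expF H P μ₁ π πt fun h s a => r h s a (dens P μ₁ π h)

/-- One-sided conditional model distance `d^{π̃}(M,M'|π)`. -/
def dCond {S A : Type*} [Fintype S] [Fintype A] (H : ℕ)
    (P P' : ℕ → S → A → (S → ℝ) → S → ℝ) (μ₁ : S → ℝ) (π πt : ℕ → S → A → ℝ) : ℝ :=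
  expF H P μ₁ π πt fun h s a => l1 (P h s a (dens P μ₁ π h)) (P' h s a (dens P' μ₁ π h))

lemma l1_nonneg {X : Type*} [Fintype X] (p q : X → ℝ) : 0 ≤ l1 p q :=
  Finset.sum_nonneg fun _ _ => abs_nonneg _

lemma l1_self {X : Type*} [Fintype X] (p : X → ℝ) : l1 p p = 0 := by
  simp [l1]

lemma sum_mul_le_of_mem_stdSimplex {X : Type*} [Fintype X] {w f : X → ℝ} {c : ℝ}
    (hw : w ∈ stdSimplex ℝ X) (hf : ∀ x, f x ≤ c) : ∑ x, w x * f x ≤ c :=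
  calc ∑ x, w x * f x ≤ ∑ x, w x * c :=
        Finset.sum_le_sum fun x _ => mul_le_mul_of_nonneg_left (hf x) (hw.1 x)
    _ = c := by rw [← Finset.sum_mul, hw.2, one_mul]

lemma abs_mul_mul_sub_mul_mul_le {x y z x' y' z' : ℝ} (hy : 0 ≤ y) (hz : 0 ≤ z)
    (hx' : 0 ≤ x') (hy' : 0 ≤ y') :
    |x * y * z - x' * y' * z'| ≤
      |x - x'| * y * z + x' * |y - y'| * z + x' * y' * |z - z'| := by
  have split : x * y * z - x' * y' * z' =
      (x - x') * y * z + x' * (y - y') * z + x' * y' * (z - z') := by ring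
  rw [split]
  refine (abs_add_le _ _).trans (add_le_add ((abs_add_le _ _).trans (add_le_add ?_ ?_)) ?_) <;>
    simp only [abs_mul, abs_of_nonneg, hy, hz, hx', hy', le_refl]

section MarkovStep

variable {S A : Type*} [Fintype S] [Fintype A]

def markovStep (μ : S → ℝ) (p : S → A → ℝ) (K : S → A → S → ℝ) : S → ℝ :=
  fun s' => ∑ s, ∑ a, μ s * p s a * K s a s'

lemma dens_succ (P : ℕ → S → A → (S → ℝ) → S → ℝ) (μ₁ : S → ℝ) (π : ℕ → S → A → ℝ) (k : ℕ) :
    dens P μ₁ π (k + 1) =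
      markovStep (dens P μ₁ π k) (π k) (fun s a => P k s a (dens P μ₁ π k)) :=
  rfl

lemma sum_sum_sum_mul_comm (w : S → A → ℝ) (K : S → A → S → ℝ) :
    ∑ s', ∑ s, ∑ a, w s a * K s a s' = ∑ s, ∑ a, w s a * ∑ s', K s a s' := by
  rw [Finset.sum_comm]
  refine Finset.sum_congr rfl fun s _ => ?_
  rw [Finset.sum_comm]
  simp only [Finset.mul_sum]

lemma markovStep_mem_stdSimplex {μ : S → ℝ} {p : S → A → ℝ} {K : S → A → S → ℝ}
    (hμ : μ ∈ stdSimplex ℝ S) (hp : ∀ s, p s ∈ stdSimplex ℝ A)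
    (hK : ∀ s a, K s a ∈ stdSimplex ℝ S) : markovStep μ p K ∈ stdSimplex ℝ S := by
  refine ⟨fun s' => Finset.sum_nonneg fun s _ => Finset.sum_nonneg fun a _ =>
    mul_nonneg (mul_nonneg (hμ.1 s) ((hp s).1 a)) ((hK s a).1 s'), ?_⟩
  simp only [markovStep, sum_sum_sum_mul_comm, (hK _ _).2, mul_one, ← Finset.mul_sum, (hp _).2,
    hμ.2]

lemma l1_markovStep_le {μ ν : S → ℝ} {p q : S → A → ℝ} {K K' : S → A → S → ℝ}
    (hp : ∀ s, p s ∈ stdSimplex ℝ A) (hK : ∀ s a, K s a ∈ stdSimplex ℝ S)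
    (hν : ∀ s, 0 ≤ ν s) (hq : ∀ s a, 0 ≤ q s a) :
    l1 (markovStep μ p K) (markovStep ν q K') ≤
      l1 μ ν + ∑ s, ν s * l1 (p s) (q s) + ∑ s, ∑ a, ν s * q s a * l1 (K s a) (K' s a) :=
  calc l1 (markovStep μ p K) (markovStep ν q K')
      = ∑ s', |∑ s, ∑ a, (μ s * p s a * K s a s' - ν s * q s a * K' s a s')| := by
        simp only [l1, markovStep, ← Finset.sum_sub_distrib]
    _ ≤ ∑ s', ∑ s, ∑ a, (|μ s - ν s| * p s a * K s a s' + ν s * |p s a - q s a| * K s a s'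
          + ν s * q s a * |K s a s' - K' s a s'|) := by
        gcongr with s' _
        refine (Finset.abs_sum_le_sum_abs _ _).trans (Finset.sum_le_sum fun s _ =>
          (Finset.abs_sum_le_sum_abs _ _).trans (Finset.sum_le_sum fun a _ => ?_))
        exact abs_mul_mul_sub_mul_mul_le ((hp s).1 a) ((hK s a).1 s') (hν s) (hq s a)
    _ = l1 μ ν + ∑ s, ν s * l1 (p s) (q s) + ∑ s, ∑ a, ν s * q s a * l1 (K s a) (K' s a) := by
        simp only [Finset.sum_add_distrib, sum_sum_sum_mul_comm, (hK _ _).2, mul_one,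
          ← Finset.mul_sum, (hp _).2, l1]

end MarkovStep

lemma le_mul_geom_sum_of_succ_le {a : ℕ → ℝ} {c D : ℝ} {n : ℕ} (hc : 0 ≤ c) (h0 : a 0 ≤ 0)
    (hsucc : ∀ k < n, a (k + 1) ≤ c * a k + D) :
    ∀ k ≤ n, a k ≤ D * ∑ j ∈ Finset.range k, c ^ j := by
  intro k
  induction k with
  | zero => simpa using h0
  | succ k ih =>
    intro hk
    calc a (k + 1) ≤ c * a k + D := hsucc k hk
      _ ≤ c * (D * ∑ j ∈ Finset.range k, c ^ j) + D := by
          gcongr; exact ih (Nat.le_of_succ_le hk)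
      _ = D * ∑ j ∈ Finset.range (k + 1), c ^ j := by rw [geom_sum_succ]; ring

lemma IsPolicy.mem_stdSimplex {S A : Type*} [Fintype A] {π : ℕ → S → A → ℝ} (hπ : IsPolicy π)
    (k : ℕ) (s : S) : π k s ∈ stdSimplex ℝ A :=
  hπ k s

section MeanField

variable {S A : Type*} [Fintype S] [Fintype A]

lemma dens_mem_stdSimplex {H : ℕ} {P : ℕ → S → A → (S → ℝ) → S → ℝ} {μ₁ : S → ℝ}
    (hμ₁ : μ₁ ∈ stdSimplex ℝ S) (hP : IsKernel H P) {π : ℕ → S → A → ℝ} (hπ : IsPolicy π) :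
    ∀ k ≤ H, dens P μ₁ π k ∈ stdSimplex ℝ S := by
  intro k
  induction k with
  | zero => exact fun _ => hμ₁
  | succ k ih =>
    intro hk
    have hd := ih (Nat.le_of_succ_le hk)
    exact markovStep_mem_stdSimplex hd (hπ.mem_stdSimplex k) fun s a => hP k hk s a _ hd

lemma l1_dens_succ_le {P : ℕ → S → A → (S → ℝ) → S → ℝ} {μ₁ : S → ℝ} {π π' : ℕ → S → A → ℝ}
    {k : ℕ} {L D : ℝ} (hπ : IsPolicy π) (hπ' : IsPolicy π')
    (hν : dens P μ₁ π' k ∈ stdSimplex ℝ S)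
    (hK : ∀ s a, P k s a (dens P μ₁ π k) ∈ stdSimplex ℝ S)
    (hPk : ∀ s a, l1 (P k s a (dens P μ₁ π k)) (P k s a (dens P μ₁ π' k)) ≤
      L * l1 (dens P μ₁ π k) (dens P μ₁ π' k))
    (hDk : ∀ s, l1 (π k s) (π' k s) ≤ D) :
    l1 (dens P μ₁ π (k + 1)) (dens P μ₁ π' (k + 1)) ≤
      (1 + L) * l1 (dens P μ₁ π k) (dens P μ₁ π' k) + D := by
  have hpolicy : ∑ s, dens P μ₁ π' k s * l1 (π k s) (π' k s) ≤ D :=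
    sum_mul_le_of_mem_stdSimplex hν hDk
  have hkernel : ∑ s, ∑ a, dens P μ₁ π' k s * π' k s a *
      l1 (P k s a (dens P μ₁ π k)) (P k s a (dens P μ₁ π' k)) ≤
        L * l1 (dens P μ₁ π k) (dens P μ₁ π' k) := by
    simpa only [Finset.mul_sum, mul_assoc] using sum_mul_le_of_mem_stdSimplex hν fun s =>
      sum_mul_le_of_mem_stdSimplex (hπ'.mem_stdSimplex k s) (hPk s)
  have hstep := l1_markovStep_le (μ := dens P μ₁ π k)
    (K' := fun s a => P k s a (dens P μ₁ π' k)) (hπ.mem_stdSimplex k) hK hν.1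
    fun s => (hπ'.mem_stdSimplex k s).1
  rw [dens_succ, dens_succ]
  linarith

lemma l1_dens_le_mul_geom_sum {H : ℕ} {P : ℕ → S → A → (S → ℝ) → S → ℝ} {μ₁ : S → ℝ}
    (hμ₁ : μ₁ ∈ stdSimplex ℝ S) (hP : IsKernel H P) {L D : ℝ} (hL : 0 ≤ L)
    {π π' : ℕ → S → A → ℝ} (hπ : IsPolicy π) (hπ' : IsPolicy π')
    (hPlip : ∀ k < H, ∀ s a, l1 (P k s a (dens P μ₁ π k)) (P k s a (dens P μ₁ π' k)) ≤
      L * l1 (dens P μ₁ π k) (dens P μ₁ π' k))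
    (hD : ∀ k < H, ∀ s, l1 (π k s) (π' k s) ≤ D) :
    ∀ k ≤ H, l1 (dens P μ₁ π k) (dens P μ₁ π' k) ≤ D * ∑ j ∈ Finset.range k, (1 + L) ^ j := by
  refine le_mul_geom_sum_of_succ_le (by linarith) (l1_self μ₁).le fun k hk => ?_
  have hμ := dens_mem_stdSimplex hμ₁ hP hπ k hk.le
  exact l1_dens_succ_le hπ hπ' (dens_mem_stdSimplex hμ₁ hP hπ' k hk.le)
    (fun s a => hP k hk s a _ hμ) (hPlip k hk) (hD k hk)

end MeanField

/-- **Lipschitz continuity of the policy-aware model.** If the MF-MDP `M` is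
Lipschitz at induced densities (transitions with constant `L_T`, rewards with constant `L_r`),
then for all policies `π, π'` and all `h < H` (0-indexed), the kernels and rewards frozen at
the induced densities are Lipschitz in the policy:
`‖P_{M,h}(·|s,a,μ^π_{M,h}) − P_{M,h}(·|s,a,μ^{π'}_{M,h})‖₁ ≤ L_T·d_{∞,1}(π,π')·Σ_{h'=1}^{h+1}(1+L_T)^{h+1−h'}`
and similarly for rewards with `L_r`; `d_{∞,1}(π,π')` is represented by an arbitrary upper
bound `D` on all `‖π_h(·|s) − π'_h(·|s)‖₁`. -/
theorem pam_lipschitz {S A : Type*} [Fintype S] [Fintype A] (H : ℕ)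
    (P : ℕ → S → A → (S → ℝ) → S → ℝ) (r : ℕ → S → A → (S → ℝ) → ℝ)
    (μ₁ : S → ℝ) (hμ₁ : μ₁ ∈ stdSimplex ℝ S) (hP : IsKernel H P)
    (L_T L_r : ℝ) (hLT : 0 ≤ L_T) (hLr : 0 ≤ L_r)
    (hPlip : ∀ π π' : ℕ → S → A → ℝ, IsPolicy π → IsPolicy π' → ∀ k, k < H → ∀ s a,
      l1 (P k s a (dens P μ₁ π k)) (P k s a (dens P μ₁ π' k)) ≤
        L_T * l1 (dens P μ₁ π k) (dens P μ₁ π' k))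
    (hrlip : ∀ π π' : ℕ → S → A → ℝ, IsPolicy π → IsPolicy π' → ∀ k, k < H → ∀ s a,
      |r k s a (dens P μ₁ π k) - r k s a (dens P μ₁ π' k)| ≤
        L_r * l1 (dens P μ₁ π k) (dens P μ₁ π' k))
    (π π' : ℕ → S → A → ℝ) (hπ : IsPolicy π) (hπ' : IsPolicy π')
    (D : ℝ) (hD : ∀ k, k < H → ∀ s, l1 (π k s) (π' k s) ≤ D) :
    ∀ k, k < H → ∀ s a,
      l1 (P k s a (dens P μ₁ π k)) (P k s a (dens P μ₁ π' k)) ≤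
        L_T * D * ∑ j ∈ Finset.range (k + 1), (1 + L_T) ^ j ∧
      |r k s a (dens P μ₁ π k) - r k s a (dens P μ₁ π' k)| ≤
        L_r * D * ∑ j ∈ Finset.range (k + 1), (1 + L_T) ^ j := by
  intro k hk s a
  obtain ⟨s₀, -, -⟩ :=
    Finset.exists_ne_zero_of_sum_ne_zero (hμ₁.2.symm ▸ one_ne_zero : ∑ s, μ₁ s ≠ 0)
  have hD0 : 0 ≤ D := (l1_nonneg _ _).trans (hD k hk s₀)
  have hdens : l1 (dens P μ₁ π k) (dens P μ₁ π' k) ≤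
      D * ∑ j ∈ Finset.range (k + 1), (1 + L_T) ^ j := by
    calc _ ≤ D * ∑ j ∈ Finset.range k, (1 + L_T) ^ j :=
          l1_dens_le_mul_geom_sum hμ₁ hP hLT hπ hπ' (hPlip π π' hπ hπ') hD k hk.le
      _ ≤ D * ∑ j ∈ Finset.range (k + 1), (1 + L_T) ^ j :=
          mul_le_mul_of_nonneg_left (Finset.sum_le_sum_of_subset_of_nonneg
            (Finset.range_subset_range.2 k.le_succ) fun j _ _ => by positivity) hD0
  rw [mul_assoc, mul_assoc]
  exact ⟨(hPlip π π' hπ hπ' k hk s a).trans (mul_le_mul_of_nonneg_left hdens hLT),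
    (hrlip π π' hπ hπ' k hk s a).trans (mul_le_mul_of_nonneg_left hdens hLr)⟩
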